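/- Let ν > 0, T* > 0, a, k ∈ ℝ∖{0}, and define v₁(t,x) = a x₁/(T*-t) + k x₂(T*-t)^{2a}, v₂(t,x) = a x₂/(T*-t) - k x₁(T*-t)^{2a}, v₃(t,x) = -2a x₃/(T*-t). Then div v = 0, Δv = 0, and there exists a pressure P such that ∂ₜv + (v·∇)v = -∇P + νΔv pointwise on [0,T*)×ℝ³; i.e., v is an explicit solution of the 3D incompressible Navier–Stokes equations with smooth initial data that blows up as t → T*. -/

import Mathlib

/-!
With `τ = T - t`, the field is linear in space, `v = A(t) x`, where `A` is the strain
`diag(a/τ, a/τ, -2a/τ)` plus the rotation rate `k τ^(2a)` about the `x₃`-axis. Hence `Δv = 0`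
and `div v = tr A = 0`, and the momentum equation reads `(A' + A²) x = -∇P`. It has a quadratic
solution `P = -½ xᵀ (A' + A²) x` as soon as `A' + A²` is symmetric; its antisymmetric part is
`ρ' + 2 (a/τ) ρ` for the rotation rate `ρ`, which vanishes for `ρ = k τ^(2a)` (the vorticity
equation `ω' = ω ∂₃v₃` for the vortex along the `x₃`-axis).
-/

/-- First component of the explicit Navier–Stokes blowup solution. -/
noncomputable def W1 (T a k t x1 x2 : ℝ) : ℝ :=
  a * x1 / (T - t) + k * x2 * (T - t) ^ (2 * a)

/-- Second component of the explicit Navier–Stokes blowup solution. -/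
noncomputable def W2 (T a k t x1 x2 : ℝ) : ℝ :=
  a * x2 / (T - t) - k * x1 * (T - t) ^ (2 * a)

/-- Third component of the explicit Navier–Stokes blowup solution. -/
noncomputable def W3 (T a t x3 : ℝ) : ℝ := -2 * a * x3 / (T - t)

noncomputable def strainRate (T a t : ℝ) : ℝ := a / (T - t)

noncomputable def rotationRate (T a k t : ℝ) : ℝ := k * (T - t) ^ (2 * a)

noncomputable def pressure (T a k t x1 x2 x3 : ℝ) : ℝ :=
  -((a / (T - t) ^ 2 + strainRate T a t ^ 2 - rotationRate T a k t ^ 2) * (x1 ^ 2 + x2 ^ 2)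
    + (-2 * (a / (T - t) ^ 2) + 4 * strainRate T a t ^ 2) * x3 ^ 2) / 2

section

variable {T a k t : ℝ}

lemma W1_eq (x1 x2 : ℝ) :
    W1 T a k t x1 x2 = strainRate T a t * x1 + rotationRate T a k t * x2 := by
  rw [W1, strainRate, rotationRate]; ring

lemma W2_eq (x1 x2 : ℝ) :
    W2 T a k t x1 x2 = strainRate T a t * x2 - rotationRate T a k t * x1 := by
  rw [W2, strainRate, rotationRate]; ring

lemma W3_eq (x3 : ℝ) : W3 T a t x3 = -2 * strainRate T a t * x3 := by
  rw [W3, strainRate]; ring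

@[simp]
lemma deriv_W1_fst (x1 x2 : ℝ) : deriv (fun s => W1 T a k t s x2) x1 = strainRate T a t := by
  simp [W1_eq]

@[simp]
lemma deriv_W1_snd (x1 x2 : ℝ) :
    deriv (fun s => W1 T a k t x1 s) x2 = rotationRate T a k t := by
  simp [W1_eq]

@[simp]
lemma deriv_W2_fst (x1 x2 : ℝ) :
    deriv (fun s => W2 T a k t s x2) x1 = -rotationRate T a k t := by
  simp [W2_eq]

@[simp]
lemma deriv_W2_snd (x1 x2 : ℝ) : deriv (fun s => W2 T a k t x1 s) x2 = strainRate T a t := by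
  simp [W2_eq]

@[simp]
lemma deriv_W3 (x3 : ℝ) : deriv (fun s => W3 T a t s) x3 = -2 * strainRate T a t := by
  simp [W3_eq]

lemma hasDerivAt_strainRate (h : t < T) :
    HasDerivAt (strainRate T a) (a / (T - t) ^ 2) t := by
  have hτ : HasDerivAt (fun s => T - s) (-1) t := by simpa using (hasDerivAt_id t).const_sub T
  have hdiv : strainRate T a = fun s => a * (T - s)⁻¹ := by ext; rw [strainRate, div_eq_mul_inv]
  rw [hdiv]
  exact ((hτ.inv (sub_ne_zero.2 h.ne')).const_mul a).congr_deriv (by ring)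

lemma hasDerivAt_rotationRate (h : t < T) :
    HasDerivAt (rotationRate T a k) (-2 * strainRate T a t * rotationRate T a k t) t := by
  have hτ : HasDerivAt (fun s => T - s) (-1) t := by simpa using (hasDerivAt_id t).const_sub T
  have hτ0 : T - t ≠ 0 := sub_ne_zero.2 h.ne'
  refine ((hτ.rpow_const (p := 2 * a) (Or.inl hτ0)).const_mul k).congr_deriv ?_
  rw [strainRate, rotationRate, Real.rpow_sub_one hτ0]
  field_simp

lemma hasDerivAt_W1_time (x1 x2 : ℝ) (h : t < T) :
    HasDerivAt (fun s => W1 T a k s x1 x2)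
      (a / (T - t) ^ 2 * x1 + -2 * strainRate T a t * rotationRate T a k t * x2) t := by
  simp only [W1_eq]
  exact ((hasDerivAt_strainRate h).mul_const x1).add ((hasDerivAt_rotationRate h).mul_const x2)

lemma hasDerivAt_W2_time (x1 x2 : ℝ) (h : t < T) :
    HasDerivAt (fun s => W2 T a k s x1 x2)
      (a / (T - t) ^ 2 * x2 - -2 * strainRate T a t * rotationRate T a k t * x1) t := by
  simp only [W2_eq]
  exact ((hasDerivAt_strainRate h).mul_const x2).sub ((hasDerivAt_rotationRate h).mul_const x1)

lemma hasDerivAt_W3_time (x3 : ℝ) (h : t < T) :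
    HasDerivAt (fun s => W3 T a s x3) (-2 * (a / (T - t) ^ 2) * x3) t := by
  simp only [W3_eq]
  exact ((hasDerivAt_strainRate h).const_mul (-2)).mul_const x3

@[simp]
lemma deriv_pressure_fst (x1 x2 x3 : ℝ) : deriv (fun s => pressure T a k t s x2 x3) x1
    = -((a / (T - t) ^ 2 + strainRate T a t ^ 2 - rotationRate T a k t ^ 2) * x1) := by
  simp [pressure]
  ring

@[simp]
lemma deriv_pressure_snd (x1 x2 x3 : ℝ) : deriv (fun s => pressure T a k t x1 s x3) x2
    = -((a / (T - t) ^ 2 + strainRate T a t ^ 2 - rotationRate T a k t ^ 2) * x2) := by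
  simp [pressure]
  ring

@[simp]
lemma deriv_pressure_thd (x1 x2 x3 : ℝ) : deriv (fun s => pressure T a k t x1 x2 s) x3
    = -((-2 * (a / (T - t) ^ 2) + 4 * strainRate T a t ^ 2) * x3) := by
  simp [pressure]
  ring

end

theorem stmt8_general (ν T a k : ℝ) :
    (∀ t x1 x2 x3 : ℝ, 0 ≤ t → t < T →
      deriv (fun s => W1 T a k t s x2) x1 + deriv (fun s => W2 T a k t x1 s) x2
        + deriv (fun s => W3 T a t s) x3 = 0) ∧
    (∀ t x1 x2 x3 : ℝ, 0 ≤ t → t < T →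
      (deriv (fun s => deriv (fun u => W1 T a k t u x2) s) x1
        + deriv (fun s => deriv (fun u => W1 T a k t x1 u) s) x2
        + deriv (fun _ : ℝ => deriv (fun _ : ℝ => W1 T a k t x1 x2) x3) x3 = 0) ∧
      (deriv (fun s => deriv (fun u => W2 T a k t u x2) s) x1
        + deriv (fun s => deriv (fun u => W2 T a k t x1 u) s) x2
        + deriv (fun _ : ℝ => deriv (fun _ : ℝ => W2 T a k t x1 x2) x3) x3 = 0) ∧
      (deriv (fun _ : ℝ => deriv (fun _ : ℝ => W3 T a t x3) x1) x1
        + deriv (fun _ : ℝ => deriv (fun _ : ℝ => W3 T a t x3) x2) x2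
        + deriv (fun s => deriv (fun u => W3 T a t u) s) x3 = 0)) ∧
    (∃ P : ℝ → ℝ → ℝ → ℝ → ℝ, ∀ t x1 x2 x3 : ℝ, 0 ≤ t → t < T →
      (deriv (fun s => W1 T a k s x1 x2) t
        + W1 T a k t x1 x2 * deriv (fun s => W1 T a k t s x2) x1
        + W2 T a k t x1 x2 * deriv (fun s => W1 T a k t x1 s) x2
        + W3 T a t x3 * deriv (fun _ : ℝ => W1 T a k t x1 x2) x3
        = - deriv (fun s => P t s x2 x3) x1
          + ν * (deriv (fun s => deriv (fun u => W1 T a k t u x2) s) x1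
            + deriv (fun s => deriv (fun u => W1 T a k t x1 u) s) x2
            + deriv (fun _ : ℝ => deriv (fun _ : ℝ => W1 T a k t x1 x2) x3) x3)) ∧
      (deriv (fun s => W2 T a k s x1 x2) t
        + W1 T a k t x1 x2 * deriv (fun s => W2 T a k t s x2) x1
        + W2 T a k t x1 x2 * deriv (fun s => W2 T a k t x1 s) x2
        + W3 T a t x3 * deriv (fun _ : ℝ => W2 T a k t x1 x2) x3
        = - deriv (fun s => P t x1 s x3) x2
          + ν * (deriv (fun s => deriv (fun u => W2 T a k t u x2) s) x1
            + deriv (fun s => deriv (fun u => W2 T a k t x1 u) s) x2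
            + deriv (fun _ : ℝ => deriv (fun _ : ℝ => W2 T a k t x1 x2) x3) x3)) ∧
      (deriv (fun s => W3 T a s x3) t
        + W1 T a k t x1 x2 * deriv (fun _ : ℝ => W3 T a t x3) x1
        + W2 T a k t x1 x2 * deriv (fun _ : ℝ => W3 T a t x3) x2
        + W3 T a t x3 * deriv (fun s => W3 T a t s) x3
        = - deriv (fun s => P t x1 x2 s) x3
          + ν * (deriv (fun _ : ℝ => deriv (fun _ : ℝ => W3 T a t x3) x1) x1
            + deriv (fun _ : ℝ => deriv (fun _ : ℝ => W3 T a t x3) x2) x2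
            + deriv (fun s => deriv (fun u => W3 T a t u) s) x3))) := by
  refine ⟨fun t x1 x2 x3 _ _ => ?_, fun t x1 x2 x3 _ _ => ?_,
    ⟨fun t x1 x2 x3 => pressure T a k t x1 x2 x3, fun t x1 x2 x3 _ htT => ?_⟩⟩
  · simp only [deriv_W1_fst, deriv_W2_snd, deriv_W3]
    ring
  · simp
  · simp only [(hasDerivAt_W1_time x1 x2 htT).deriv, (hasDerivAt_W2_time x1 x2 htT).deriv,
      (hasDerivAt_W3_time x3 htT).deriv, deriv_pressure_fst, deriv_pressure_snd,
      deriv_pressure_thd, deriv_W1_fst, deriv_W1_snd, deriv_W2_fst, deriv_W2_snd, deriv_W3,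
      deriv_const', mul_zero, add_zero]
    simp only [W1_eq, W2_eq, W3_eq]
    exact ⟨by ring, by ring, by ring⟩

/-- The field `v₁ = ax₁/(T-t) + kx₂(T-t)^{2a}`, `v₂ = ax₂/(T-t) - kx₁(T-t)^{2a}`,
`v₃ = -2ax₃/(T-t)` is divergence-free, harmonic in `x` (`Δv = 0`), and solves the
3D incompressible Navier–Stokes equations `∂ₜv + (v·∇)v = -∇P + νΔv` on
`[0,T*) × ℝ³` for some pressure `P`. -/
theorem stmt8 (ν T a k : ℝ) (hν : 0 < ν) (hT : 0 < T) (ha : a ≠ 0) (hk : k ≠ 0) :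
    (∀ t x1 x2 x3 : ℝ, 0 ≤ t → t < T →
      deriv (fun s => W1 T a k t s x2) x1 + deriv (fun s => W2 T a k t x1 s) x2
        + deriv (fun s => W3 T a t s) x3 = 0) ∧
    (∀ t x1 x2 x3 : ℝ, 0 ≤ t → t < T →
      (deriv (fun s => deriv (fun u => W1 T a k t u x2) s) x1
        + deriv (fun s => deriv (fun u => W1 T a k t x1 u) s) x2
        + deriv (fun _ : ℝ => deriv (fun _ : ℝ => W1 T a k t x1 x2) x3) x3 = 0) ∧
      (deriv (fun s => deriv (fun u => W2 T a k t u x2) s) x1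
        + deriv (fun s => deriv (fun u => W2 T a k t x1 u) s) x2
        + deriv (fun _ : ℝ => deriv (fun _ : ℝ => W2 T a k t x1 x2) x3) x3 = 0) ∧
      (deriv (fun _ : ℝ => deriv (fun _ : ℝ => W3 T a t x3) x1) x1
        + deriv (fun _ : ℝ => deriv (fun _ : ℝ => W3 T a t x3) x2) x2
        + deriv (fun s => deriv (fun u => W3 T a t u) s) x3 = 0)) ∧
    (∃ P : ℝ → ℝ → ℝ → ℝ → ℝ, ∀ t x1 x2 x3 : ℝ, 0 ≤ t → t < T →
      (deriv (fun s => W1 T a k s x1 x2) t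
        + W1 T a k t x1 x2 * deriv (fun s => W1 T a k t s x2) x1
        + W2 T a k t x1 x2 * deriv (fun s => W1 T a k t x1 s) x2
        + W3 T a t x3 * deriv (fun _ : ℝ => W1 T a k t x1 x2) x3
        = - deriv (fun s => P t s x2 x3) x1
          + ν * (deriv (fun s => deriv (fun u => W1 T a k t u x2) s) x1
            + deriv (fun s => deriv (fun u => W1 T a k t x1 u) s) x2
            + deriv (fun _ : ℝ => deriv (fun _ : ℝ => W1 T a k t x1 x2) x3) x3)) ∧
      (deriv (fun s => W2 T a k s x1 x2) t
        + W1 T a k t x1 x2 * deriv (fun s => W2 T a k t s x2) x1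
        + W2 T a k t x1 x2 * deriv (fun s => W2 T a k t x1 s) x2
        + W3 T a t x3 * deriv (fun _ : ℝ => W2 T a k t x1 x2) x3
        = - deriv (fun s => P t x1 s x3) x2
          + ν * (deriv (fun s => deriv (fun u => W2 T a k t u x2) s) x1
            + deriv (fun s => deriv (fun u => W2 T a k t x1 u) s) x2
            + deriv (fun _ : ℝ => deriv (fun _ : ℝ => W2 T a k t x1 x2) x3) x3)) ∧
      (deriv (fun s => W3 T a s x3) t
        + W1 T a k t x1 x2 * deriv (fun _ : ℝ => W3 T a t x3) x1
        + W2 T a k t x1 x2 * deriv (fun _ : ℝ => W3 T a t x3) x2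
        + W3 T a t x3 * deriv (fun s => W3 T a t s) x3
        = - deriv (fun s => P t x1 x2 s) x3
          + ν * (deriv (fun _ : ℝ => deriv (fun _ : ℝ => W3 T a t x3) x1) x1
            + deriv (fun _ : ℝ => deriv (fun _ : ℝ => W3 T a t x3) x2) x2
            + deriv (fun s => deriv (fun u => W3 T a t u) s) x3))) :=
  stmt8_general ν T a k
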